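/- arXiv:1212.0177 — 10 statements merged into one kernel-verified Lean document; each statement's English description precedes it below -/
import Mathlib

section
/- Let (A, ⊣, ⊢, ⊥) be an associative trialgebra over a field k. Define two new bilinear operations on A by x ⋄ y := x ⊣ y − y ⊢ x and [x, y] := x ⊥ y − y ⊥ x. Then (A, ⋄, [ , ]) is a triLeibniz algebra; that is, [ , ] is skew-symmetric and for all x, y, z ∈ A: [x,[y,z]] + [y,[z,x]] + [z,[x,y]] = 0; x ⋄ [y,z] = x ⋄ (y ⋄ z); [x,y] ⋄ z = [x ⋄ z, y] + [x, y ⋄ z]; and (x ⋄ y) ⋄ z = x ⋄ (y ⋄ z) + (x ⋄ z) ⋄ y. -/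
/-- Every associative trialgebra yields a triLeibniz algebra via
`x ⋄ y := x ⊣ y − y ⊢ x` and `[x, y] := x ⊥ y − y ⊥ x`. -/
theorem stmt_0 {k A : Type*} [Field k] [AddCommGroup A] [Module k A]
    (l r b : A →ₗ[k] A →ₗ[k] A)
    (h1 : ∀ x y z : A, l (l x y) z = l x (l y z))
    (h2 : ∀ x y z : A, l (l x y) z = l x (r y z))
    (h3 : ∀ x y z : A, l (l x y) z = l x (b y z))
    (h4 : ∀ x y z : A, l (r x y) z = r x (l y z))
    (h5 : ∀ x y z : A, r (l x y) z = r x (r y z))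
    (h6 : ∀ x y z : A, r (r x y) z = r x (r y z))
    (h7 : ∀ x y z : A, r (b x y) z = r x (r y z))
    (h8 : ∀ x y z : A, l (b x y) z = b x (l y z))
    (h9 : ∀ x y z : A, b (l x y) z = b x (r y z))
    (h10 : ∀ x y z : A, b (r x y) z = r x (b y z))
    (h11 : ∀ x y z : A, b (b x y) z = b x (b y z))
    (d br : A → A → A)
    (hd : ∀ x y, d x y = l x y - r y x)
    (hbr : ∀ x y, br x y = b x y - b y x) :
    (∀ x y, br x y = - br y x) ∧
    (∀ x y z, br x (br y z) + br y (br z x) + br z (br x y) = 0) ∧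
    (∀ x y z, d x (br y z) = d x (d y z)) ∧
    (∀ x y z, d (br x y) z = br (d x z) y + br x (d y z)) ∧
    (∀ x y z, d (d x y) z = d x (d y z) + d (d x z) y) := by
  have k2 : ∀ x y z : A, l x (r y z) = l x (l y z) := fun x y z => by rw [← h2, h1]
  have k3 : ∀ x y z : A, l x (b y z) = l x (l y z) := fun x y z => by rw [← h3, h1]
  refine ⟨fun x y => by rw [hbr x y, hbr y x]; abel, ?_, ?_, ?_, ?_⟩ <;> intro x y z <;>
    simp only [hd, hbr, map_sub, LinearMap.sub_apply, h1, k2, k3, h4, h5, h6, h7, h8, h9, h10, h11] <;>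
    abel
end

section
/- Let (A, ·) be an associative algebra over a field k and let P : A → A be a di-average operator. Define x ⊢ y := P(x) · y and x ⊣ y := x · P(y). Then (A, ⊣, ⊢) is a diassociative algebra; that is, for all x, y, z ∈ A: (x⊣y)⊣z = x⊣(y⊣z), x⊣(y⊣z) = x⊣(y⊢z), (x⊢y)⊣z = x⊢(y⊣z), (x⊣y)⊢z = x⊢(y⊢z), and (x⊢y)⊢z = x⊢(y⊢z). -/
/-- A di-average operator on an associative algebra gives a diassociative
algebra via `x ⊣ y := x · P y` and `x ⊢ y := P x · y`. -/
theorem stmt_1 {k A : Type*} [Field k] [NonUnitalRing A] [Module k A]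
    [IsScalarTower k A A] [SMulCommClass k A A]
    (P : A →ₗ[k] A)
    (hP1 : ∀ x y : A, P (x * P y) = P x * P y)
    (hP2 : ∀ x y : A, P (P x * y) = P x * P y) :
    ∀ x y z : A,
      (x * P y) * P z = x * P (y * P z) ∧
      x * P (y * P z) = x * P (P y * z) ∧
      (P x * y) * P z = P x * (y * P z) ∧
      P (x * P y) * z = P x * (P y * z) ∧
      P (P x * y) * z = P x * (P y * z) := by
  intro x y z
  refine ⟨?_, ?_, ?_, ?_, ?_⟩ <;> simp [hP1, hP2, mul_assoc]
end

section
/- Let (L, [ , ]) be a Lie algebra over a field k and let P : L → L be a di-average operator (with respect to the bracket). Define {x, y} := [P(x), y]. Then (L, { , }) is a left Leibniz algebra; that is, {x, {y, z}} = {{x, y}, z} + {y, {x, z}} for all x, y, z ∈ L. -/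
/-- A di-average operator on a Lie algebra gives a left Leibniz algebra via
`{x, y} := [P x, y]`. -/
theorem stmt_2 {k L : Type*} [Field k] [LieRing L] [LieAlgebra k L]
    (P : L →ₗ[k] L)
    (hP1 : ∀ x y : L, P ⁅x, P y⁆ = ⁅P x, P y⁆)
    (hP2 : ∀ x y : L, P ⁅P x, y⁆ = ⁅P x, P y⁆) :
    ∀ x y z : L, ⁅P x, ⁅P y, z⁆⁆ = ⁅P ⁅P x, y⁆, z⁆ + ⁅P y, ⁅P x, z⁆⁆ := by
  intro x y z
  rw [hP2, leibniz_lie]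
end

section
/- Let (A, ·, [ , ]) be a left Poisson algebra over a field k and let P : A → A be a k-linear map that is simultaneously a di-average operator for the product · and for the bracket [ , ]. Define x ∘ y := P(x) · y and {x, y} := [P(x), y]. Then (A, ∘, { , }) is a dual left pre-Poisson algebra; that is, { , } is a left Leibniz bracket, ∘ is a left permutative product, and for all x, y, z ∈ A: {x, y ∘ z} = {x, y} ∘ z + y ∘ {x, z}; {x ∘ y, z} = x ∘ {y, z} + y ∘ {x, z}; and {x, y} ∘ z = −{y, x} ∘ z. -/
/-- A simultaneous di-average operator on a left Poisson algebra gives a dual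
left pre-Poisson algebra via `x ∘ y := P x · y` and `{x, y} := [P x, y]`. -/
theorem stmt_3 {k A : Type*} [Field k] [AddCommGroup A] [Module k A]
    (m : A →ₗ[k] A →ₗ[k] A) (bk : A →ₗ[k] A →ₗ[k] A)
    (hcomm : ∀ x y : A, m x y = m y x)
    (hassoc : ∀ x y z : A, m (m x y) z = m x (m y z))
    (halt : ∀ x : A, bk x x = 0)
    (hjac : ∀ x y z : A, bk x (bk y z) + bk y (bk z x) + bk z (bk x y) = 0)
    (hleib : ∀ x y z : A, bk x (m y z) = m (bk x y) z + m y (bk x z))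
    (P : A →ₗ[k] A)
    (hm1 : ∀ x y : A, P (m x (P y)) = m (P x) (P y))
    (hm2 : ∀ x y : A, P (m (P x) y) = m (P x) (P y))
    (hb1 : ∀ x y : A, P (bk x (P y)) = bk (P x) (P y))
    (hb2 : ∀ x y : A, P (bk (P x) y) = bk (P x) (P y))
    (c lb : A → A → A)
    (hc : ∀ x y, c x y = m (P x) y)
    (hlb : ∀ x y, lb x y = bk (P x) y) :
    (∀ x y z, lb x (lb y z) = lb (lb x y) z + lb y (lb x z)) ∧
    (∀ x y z, c x (c y z) = c (c x y) z) ∧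
    (∀ x y z, c (c x y) z = c (c y x) z) ∧
    (∀ x y z, lb x (c y z) = c (lb x y) z + c y (lb x z)) ∧
    (∀ x y z, lb (c x y) z = c x (lb y z) + c y (lb x z)) ∧
    (∀ x y z, c (lb x y) z = - c (lb y x) z) := by
  have hanti : ∀ a b : A, bk a b = - bk b a := by
    intro a b
    have h := halt (a + b)
    simp only [map_add, LinearMap.add_apply, halt a, halt b, zero_add, add_zero] at h
    exact eq_neg_of_add_eq_zero_right h
  refine ⟨?_, ?_, ?_, ?_, ?_, ?_⟩
  · intro x y z
    simp only [hlb, hb2]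
    have j := hjac (P x) (P y) z
    rw [hanti z (P x), map_neg, hanti z (bk (P x) (P y))] at j
    refine eq_of_sub_eq_zero ?_
    rw [← j]; abel
  · intro x y z
    simp only [hc, hm2, hassoc]
  · intro x y z
    simp only [hc, hm2, hcomm (P x) (P y)]
  · intro x y z
    simp only [hlb, hc, hb2, hleib]
  · intro x y z
    simp only [hlb, hc, hm2]
    rw [hanti (m (P x) (P y)) z, hleib, hanti z (P x), hanti z (P y)]
    simp only [map_neg, LinearMap.neg_apply]
    rw [hcomm (bk (P x) z) (P y)]
    abel
  · intro x y z
    simp only [hc, hlb, hb2, hanti (P x) (P y)]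
    simp only [map_neg, LinearMap.neg_apply, neg_neg]
end

section
/- Let (A, ·) be a commutative associative algebra over a field k and let P : A → A be a di-average operator. Define x ∘ y := P(x) · y. Then (A, ∘) is a left permutative algebra; that is, x ∘ (y ∘ z) = (x ∘ y) ∘ z = (y ∘ x) ∘ z for all x, y, z ∈ A. -/
/-- A di-average operator on a commutative associative algebra gives a left
permutative algebra via `x ∘ y := P x · y`. -/
theorem stmt_4 {k A : Type*} [Field k] [NonUnitalCommRing A] [Module k A]
    [IsScalarTower k A A] [SMulCommClass k A A]
    (P : A →ₗ[k] A)
    (hP1 : ∀ x y : A, P (x * P y) = P x * P y)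
    (hP2 : ∀ x y : A, P (P x * y) = P x * P y) :
    ∀ x y z : A,
      P x * (P y * z) = P (P x * y) * z ∧
      P (P x * y) * z = P (P y * x) * z := by
  intro x y z
  constructor
  · rw [hP2, mul_assoc]
  · rw [hP2, hP2, mul_comm (P x)]
end

section
/- Let (A, ·) be a left pre-Lie algebra over a field k and let P : A → A be a di-average operator. Define x ⊣ y := x · P(y) and x ⊢ y := P(x) · y. Then (A, ⊣, ⊢) is a pre-Lie dialgebra; that is, for all x, y, z ∈ A: x⊣(y⊣z) = x⊣(y⊢z); (x⊢y)⊢z = (x⊣y)⊢z; x⊣(y⊣z) − (x⊣y)⊣z = y⊢(x⊣z) − (y⊢x)⊣z; and x⊢(y⊢z) − (x⊢y)⊢z = y⊢(x⊢z) − (y⊢x)⊢z. -/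
/-- A di-average operator on a left pre-Lie algebra gives a pre-Lie dialgebra
via `x ⊣ y := x · P y` and `x ⊢ y := P x · y`. -/
theorem stmt_5 {k A : Type*} [Field k] [AddCommGroup A] [Module k A]
    (m : A →ₗ[k] A →ₗ[k] A)
    (hpl : ∀ x y z : A, m (m x y) z - m x (m y z) = m (m y x) z - m y (m x z))
    (P : A →ₗ[k] A)
    (hP1 : ∀ x y : A, P (m x (P y)) = m (P x) (P y))
    (hP2 : ∀ x y : A, P (m (P x) y) = m (P x) (P y)) :
    ∀ x y z : A,
      m x (P (m y (P z))) = m x (P (m (P y) z)) ∧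
      m (P (m (P x) y)) z = m (P (m x (P y))) z ∧
      m x (P (m y (P z))) - m (m x (P y)) (P z)
        = m (P y) (m x (P z)) - m (m (P y) x) (P z) ∧
      m (P x) (m (P y) z) - m (P (m (P x) y)) z
        = m (P y) (m (P x) z) - m (P (m (P y) x)) z := by
  intro x y z
  refine ⟨by rw [hP1, hP2], by rw [hP1, hP2], ?_, ?_⟩
  · rw [hP1]
    rw [← neg_inj, neg_sub, neg_sub]; exact hpl x (P y) (P z)
  · rw [hP2, hP2]
    rw [← neg_inj, neg_sub, neg_sub]; exact hpl (P x) (P y) z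
end

section
/- Let (A, ·) be an associative algebra over a field k and let P : A → A be a tri-average operator of weight one. Define x ⊣ y := x · P(y), x ⊢ y := P(x) · y and x ⊥ y := x · y. Then (A, ⊣, ⊢, ⊥) is an associative trialgebra; that is, the eleven Loday–Ronco trialgebra identities hold: (x⊣y)⊣z = x⊣(y⊣z), (x⊣y)⊣z = x⊣(y⊢z), (x⊣y)⊣z = x⊣(y⊥z), (x⊢y)⊣z = x⊢(y⊣z), (x⊣y)⊢z = x⊢(y⊢z), (x⊢y)⊢z = x⊢(y⊢z), (x⊥y)⊢z = x⊢(y⊢z), (x⊥y)⊣z = x⊥(y⊣z), (x⊣y)⊥z = x⊥(y⊢z), (x⊢y)⊥z = x⊢(y⊥z), (x⊥y)⊥z = x⊥(y⊥z) for all x, y, z ∈ A. -/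
/-- A tri-average operator of weight one on an associative algebra gives an
associative trialgebra via `x ⊣ y := x · P y`, `x ⊢ y := P x · y`,
`x ⊥ y := x · y`. -/
theorem stmt_6 {k A : Type*} [Field k] [NonUnitalRing A] [Module k A]
    [IsScalarTower k A A] [SMulCommClass k A A]
    (P : A →ₗ[k] A)
    (hP1 : ∀ x y : A, P (x * P y) = P x * P y)
    (hP2 : ∀ x y : A, P (P x * y) = P x * P y)
    (hP3 : ∀ x y : A, P x * P y = P (x * y)) :
    ∀ x y z : A,
      (x * P y) * P z = x * P (y * P z) ∧
      (x * P y) * P z = x * P (P y * z) ∧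
      (x * P y) * P z = x * P (y * z) ∧
      (P x * y) * P z = P x * (y * P z) ∧
      P (x * P y) * z = P x * (P y * z) ∧
      P (P x * y) * z = P x * (P y * z) ∧
      P (x * y) * z = P x * (P y * z) ∧
      (x * y) * P z = x * (y * P z) ∧
      (x * P y) * z = x * (P y * z) ∧
      (P x * y) * z = P x * (y * z) ∧
      (x * y) * z = x * (y * z) := by
  intro x y z
  refine ⟨?_, ?_, ?_, ?_, ?_, ?_, ?_, ?_, ?_, ?_, ?_⟩ <;>
    simp [hP1, hP2, ← hP3, mul_assoc]
end

section
/- Let (L, [ , ]) be a Lie algebra over a field k and let P : L → L be a tri-average operator of weight one (with respect to the bracket). Define x ⋄ y := [x, P(y)]. Then (L, ⋄, [ , ]) is a triLeibniz algebra; that is, for all x, y, z ∈ L: x ⋄ [y, z] = x ⋄ (y ⋄ z); [x, y] ⋄ z = [x ⋄ z, y] + [x, y ⋄ z]; and (x ⋄ y) ⋄ z = x ⋄ (y ⋄ z) + (x ⋄ z) ⋄ y (the skew-symmetry of [ , ] and the Jacobi identity [x,[y,z]] + [y,[z,x]] + [z,[x,y]] = 0 holding already since [ , ] is a Lie bracket).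 -/
/-- A tri-average operator of weight one on a Lie algebra gives a triLeibniz
algebra via `x ⋄ y := [x, P y]` together with the bracket itself. -/
theorem stmt_7 {k L : Type*} [Field k] [LieRing L] [LieAlgebra k L]
    (P : L →ₗ[k] L)
    (hP1 : ∀ x y : L, P ⁅x, P y⁆ = ⁅P x, P y⁆)
    (hP2 : ∀ x y : L, P ⁅P x, y⁆ = ⁅P x, P y⁆)
    (hP3 : ∀ x y : L, ⁅P x, P y⁆ = P ⁅x, y⁆) :
    ∀ x y z : L,
      ⁅x, P ⁅y, z⁆⁆ = ⁅x, P ⁅y, P z⁆⁆ ∧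
      ⁅⁅x, y⁆, P z⁆ = ⁅⁅x, P z⁆, y⁆ + ⁅x, ⁅y, P z⁆⁆ ∧
      ⁅⁅x, P y⁆, P z⁆ = ⁅x, P ⁅y, P z⁆⁆ + ⁅⁅x, P z⁆, P y⁆ := by
  intro x y z
  refine ⟨by rw [hP1, hP3], ?_, ?_⟩
  · rw [lie_lie, ← lie_skew ⁅x, P z⁆ y]; abel
  · rw [hP1, lie_lie, ← lie_skew ⁅x, P z⁆ (P y)]; abel
end

section
/- Let (A, ·) be a commutative associative algebra over a field k and let P : A → A be a tri-average operator of weight one. Define x ⋆ y := x · P(y) and x • y := x · y. Then (A, ⋆, •) is a commutative trialgebra; that is, • is commutative and for all x, y, z ∈ A: (x ⋆ y) ⋆ z = x ⋆ (y ⋆ z); x ⋆ (y ⋆ z) = x ⋆ (z ⋆ y); x ⋆ (y ⋆ z) = x ⋆ (y • z); (x • y) ⋆ z = x • (y ⋆ z); and (x • y) • z = x • (y • z). -/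
/-- A tri-average operator of weight one on a commutative associative algebra
gives a commutative trialgebra via `x ⋆ y := x · P y` and `x • y := x · y`. -/
theorem stmt_8 {k A : Type*} [Field k] [NonUnitalCommRing A] [Module k A]
    [IsScalarTower k A A] [SMulCommClass k A A]
    (P : A →ₗ[k] A)
    (hP1 : ∀ x y : A, P (x * P y) = P x * P y)
    (hP2 : ∀ x y : A, P (P x * y) = P x * P y)
    (hP3 : ∀ x y : A, P x * P y = P (x * y)) :
    ∀ x y z : A,
      x * y = y * x ∧
      (x * P y) * P z = x * P (y * P z) ∧
      x * P (y * P z) = x * P (z * P y) ∧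
      x * P (y * P z) = x * P (y * z) ∧
      (x * y) * P z = x * (y * P z) ∧
      (x * y) * z = x * (y * z) := by
  intro x y z
  refine ⟨mul_comm x y, ?_, ?_, ?_, mul_assoc x y (P z), mul_assoc x y z⟩
  · rw [hP1, mul_assoc]
  · rw [hP1, hP1, mul_comm (P y) (P z)]
  · rw [hP1, hP3]
end

section
/- Let (A, ·) be an associative algebra over a field k and let P : A → A be a tri-average operator of weight one. Define x ⋄ y := x · P(y) − P(y) · x and [x, y] := x · y − y · x. Then (A, ⋄, [ , ]) is a triLeibniz algebra; that is, [ , ] is skew-symmetric and for all x, y, z ∈ A: [x,[y,z]] + [y,[z,x]] + [z,[x,y]] = 0; x ⋄ [y, z] = x ⋄ (y ⋄ z); [x, y] ⋄ z = [x ⋄ z, y] + [x, y ⋄ z]; and (x ⋄ y) ⋄ z = x ⋄ (y ⋄ z) + (x ⋄ z) ⋄ y. -/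
/-- A tri-average operator of weight one on an associative algebra gives a
triLeibniz algebra via `x ⋄ y := x · P y − P y · x` and
`[x, y] := x · y − y · x`. -/
theorem stmt_11 {k A : Type*} [Field k] [NonUnitalRing A] [Module k A]
    [IsScalarTower k A A] [SMulCommClass k A A]
    (P : A →ₗ[k] A)
    (hP1 : ∀ x y : A, P (x * P y) = P x * P y)
    (hP2 : ∀ x y : A, P (P x * y) = P x * P y)
    (hP3 : ∀ x y : A, P x * P y = P (x * y))
    (d br : A → A → A)
    (hd : ∀ x y, d x y = x * P y - P y * x)
    (hbr : ∀ x y, br x y = x * y - y * x) :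
    (∀ x y, br x y = - br y x) ∧
    (∀ x y z, br x (br y z) + br y (br z x) + br z (br x y) = 0) ∧
    (∀ x y z, d x (br y z) = d x (d y z)) ∧
    (∀ x y z, d (br x y) z = br (d x z) y + br x (d y z)) ∧
    (∀ x y z, d (d x y) z = d x (d y z) + d (d x z) y) := by
  have key : ∀ y z : A, P (y * P z - P z * y) = P y * P z - P z * P y := by
    intro y z
    rw [map_sub, hP1, hP2]
  refine ⟨fun x y => by simp only [hbr]; noncomm_ring,
    fun x y z => by simp only [hbr]; noncomm_ring,
    fun x y z => by rw [hd x (br y z), hd x (d y z), hd y z, key, hbr, map_sub, ← hP3, ← hP3],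
    fun x y z => by simp only [hd, hbr]; noncomm_ring,
    fun x y z => by simp only [hd, hbr, key]; noncomm_ring⟩
end
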